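/- arXiv:1002.4233 — 2 statements merged into one kernel-verified Lean document; each statement's English description precedes it below -/
import Mathlib

section
/- Let P ⊆ A be an inclusion of separable unital C*-algebras and E: A → P a faithful conditional expectation of index-finite type with the Rokhlin property. If A is simple, then P is simple. -/
open Filter Topology

noncomputable section

universe u v w

/-! ### Star-closed two-sided ideals and their quotient star algebras -/

/-- A star-closed two-sided ideal of a ring with involution. -/
structure StarIdeal (R : Type*) [NonUnitalNonAssocRing R] [Star R] extends TwoSidedIdeal R where
  star_mem' : ∀ x : R, x ∈ toTwoSidedIdeal → star x ∈ toTwoSidedIdeal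

namespace StarIdeal

variable {R : Type v} [Ring R] [Algebra ℂ R] [StarRing R] (J : StarIdeal R)

/-- The quotient star algebra by a star-closed two-sided ideal. -/
def Quot (J : StarIdeal R) : Type _ := J.ringCon.Quotient

instance : Ring J.Quot := inferInstanceAs (Ring J.ringCon.Quotient)

/-- The quotient map. -/
def mkq : R →+* J.Quot := RingCon.mk' J.ringCon

lemma rel_of (a b : R) (h : a - b ∈ J.toTwoSidedIdeal) : J.ringCon a b :=
  (J.toTwoSidedIdeal.rel_iff a b).mpr h

lemma mem_of_rel {a b : R} (h : J.ringCon a b) : a - b ∈ J.toTwoSidedIdeal :=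
  (J.toTwoSidedIdeal.rel_iff a b).mp h

instance : Star J.Quot :=
  ⟨Quotient.map' (fun x => star x) (fun a b h => J.rel_of _ _ (by
    have := J.star_mem' _ (J.mem_of_rel h)
    simpa [star_sub] using this))⟩

lemma mkq_star (a : R) : J.mkq (star a) = star (J.mkq a) := rfl

instance : StarRing J.Quot where
  star_involutive := by rintro ⟨a⟩; exact congrArg (J.mkq) (star_star a)
  star_mul := by rintro ⟨a⟩ ⟨b⟩; exact congrArg (J.mkq) (star_mul a b)
  star_add := by rintro ⟨a⟩ ⟨b⟩; exact congrArg (J.mkq) (star_add a b)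

instance : SMul ℂ J.Quot :=
  ⟨fun c => Quotient.map' (fun x => c • x) (fun a b h => J.rel_of _ _ (by
    rw [← smul_sub, Algebra.smul_def]
    exact J.toTwoSidedIdeal.mul_mem_left _ _ (J.mem_of_rel h)))⟩

lemma mkq_smul (c : ℂ) (a : R) : J.mkq (c • a) = c • J.mkq a := rfl

instance : Module ℂ J.Quot where
  one_smul := by rintro ⟨a⟩; exact congrArg J.mkq (one_smul ℂ a)
  mul_smul c d := by rintro ⟨a⟩; exact congrArg J.mkq (mul_smul c d a)
  smul_zero c := congrArg J.mkq (smul_zero c)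
  smul_add c := by rintro ⟨a⟩ ⟨b⟩; exact congrArg J.mkq (smul_add c a b)
  add_smul c d := by rintro ⟨a⟩; exact congrArg J.mkq (add_smul c d a)
  zero_smul := by rintro ⟨a⟩; exact congrArg J.mkq (zero_smul ℂ a)

instance : Algebra ℂ J.Quot where
  algebraMap := J.mkq.comp (algebraMap ℂ R)
  commutes' c := by rintro ⟨a⟩; exact congrArg J.mkq (Algebra.commutes c a)
  smul_def' c := by rintro ⟨a⟩; exact congrArg J.mkq (Algebra.smul_def c a)

/-- The map between quotients induced by an inclusion of star ideals. -/
def quotMap {J K : StarIdeal R} (h : ∀ x, x ∈ J.toTwoSidedIdeal → x ∈ K.toTwoSidedIdeal) :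
    J.Quot → K.Quot :=
  Quotient.map' id (fun a b hab => K.rel_of _ _ (h _ (J.mem_of_rel hab)))

end StarIdeal

/-! ### The sequence algebra `A^∞ = ℓ^∞(ℕ, A)/c₀(ℕ, A)` -/

section Seq

variable (A : Type u) [CStarAlgebra A]

/-- The ℓ^∞-sequence star subalgebra of `ℕ → A`. -/
def bddSubalg : StarSubalgebra ℂ (ℕ → A) where
  carrier := {f | ∃ C, ∀ n, ‖f n‖ ≤ C}
  mul_mem' := by
    rintro f g ⟨C, hC⟩ ⟨D, hD⟩
    refine ⟨(max C 0) * (max D 0), fun n => ?_⟩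
    calc ‖(f * g) n‖ = ‖f n * g n‖ := rfl
      _ ≤ ‖f n‖ * ‖g n‖ := norm_mul_le _ _
      _ ≤ (max C 0) * (max D 0) := by
          apply mul_le_mul ((hC n).trans (le_max_left _ _)) ((hD n).trans (le_max_left _ _))
            (norm_nonneg _) (le_max_right _ _)
  one_mem' := ⟨‖(1 : A)‖, fun n => le_rfl⟩
  add_mem' := by
    rintro f g ⟨C, hC⟩ ⟨D, hD⟩
    exact ⟨C + D, fun n => (norm_add_le _ _).trans (add_le_add (hC n) (hD n))⟩
  zero_mem' := ⟨0, fun n => by simp⟩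
  algebraMap_mem' := fun c => ⟨‖c‖ * ‖(1 : A)‖, fun n => le_of_eq (norm_algebraMap A c)⟩
  star_mem' := by
    rintro f ⟨C, hC⟩
    exact ⟨C, fun n => by simpa [norm_star] using hC n⟩

/-- The C*-algebra of bounded sequences (as a type). -/
abbrev BddSeq := ↥(bddSubalg A)

/-- The ideal of null sequences inside the bounded sequences. -/
def nullIdeal : StarIdeal (BddSeq A) where
  toTwoSidedIdeal := TwoSidedIdeal.mk'
    {f : BddSeq A | Tendsto (fun n => ‖(f : ℕ → A) n‖) atTop (𝓝 0)}
    (by simpa using tendsto_const_nhds)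
    (by
      intro f g hf hg
      refine squeeze_zero (fun n => norm_nonneg _) (fun n => norm_add_le _ _) ?_
      simpa using hf.add hg)
    (by intro f hf; simpa using hf)
    (by
      intro f g hg
      obtain ⟨C, hC⟩ := f.2
      refine squeeze_zero (fun n => norm_nonneg _) (fun n => norm_mul_le _ _) ?_
      have : Tendsto (fun n => (max C 0) * ‖(g : ℕ → A) n‖) atTop (𝓝 ((max C 0) * 0)) :=
        hg.const_mul _
      refine squeeze_zero (fun n => by positivity) (fun n => ?_) (by simpa using this)
      exact mul_le_mul_of_nonneg_right ((hC n).trans (le_max_left _ _)) (norm_nonneg _))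
    (by
      intro f g hf
      obtain ⟨C, hC⟩ := g.2
      refine squeeze_zero (fun n => norm_nonneg _) (fun n => norm_mul_le _ _) ?_
      have : Tendsto (fun n => ‖(f : ℕ → A) n‖ * (max C 0)) atTop (𝓝 (0 * (max C 0))) :=
        hf.mul_const _
      refine squeeze_zero (fun n => by positivity) (fun n => ?_) (by simpa using this)
      exact mul_le_mul_of_nonneg_left ((hC n).trans (le_max_left _ _)) (norm_nonneg _))
  star_mem' := by
    intro f hf
    rw [TwoSidedIdeal.mem_mk'] at hf ⊢
    simpa [norm_star] using hf

lemma mem_nullIdeal_iff (f : BddSeq A) :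
    f ∈ (nullIdeal A).toTwoSidedIdeal ↔ Tendsto (fun n => ‖(f : ℕ → A) n‖) atTop (𝓝 0) := by
  constructor
  · intro h
    have h' : f - 0 ∈ {g : BddSeq A | Tendsto (fun n => ‖(g : ℕ → A) n‖) atTop (𝓝 0)} := h
    simpa using h'
  · intro h
    show f - 0 ∈ {g : BddSeq A | Tendsto (fun n => ‖(g : ℕ → A) n‖) atTop (𝓝 0)}
    simpa using h

/-- The sequence algebra `A^∞ = ℓ^∞(ℕ, A)/c₀(ℕ, A)` of a C*-algebra `A`. -/
def SeqAlg : Type u := (nullIdeal A).Quot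

instance : Ring (SeqAlg A) := inferInstanceAs (Ring (nullIdeal A).Quot)
instance : StarRing (SeqAlg A) := inferInstanceAs (StarRing (nullIdeal A).Quot)
instance : Algebra ℂ (SeqAlg A) := inferInstanceAs (Algebra ℂ (nullIdeal A).Quot)

variable {A}

/-- The constant sequence, as an element of the bounded sequences. -/
def constBdd (a : A) : BddSeq A := ⟨fun _ => a, ⟨‖a‖, fun _ => le_rfl⟩⟩

variable (A)

/-- The canonical unital embedding of `A` into `A^∞` by constant sequences. -/
def constSeq : A →⋆ₐ[ℂ] SeqAlg A where
  toFun a := (nullIdeal A).mkq (constBdd a)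
  map_one' := congrArg (nullIdeal A).mkq (by ext n; rfl)
  map_mul' a b := congrArg (nullIdeal A).mkq (by ext n; rfl)
  map_zero' := congrArg (nullIdeal A).mkq (by ext n; rfl)
  map_add' a b := congrArg (nullIdeal A).mkq (by ext n; rfl)
  commutes' c := congrArg (nullIdeal A).mkq (by ext n; rfl)
  map_star' a := congrArg (nullIdeal A).mkq (by ext n; rfl)

variable {A}
variable {B : Type u} [CStarAlgebra B]

/-- The bounded-sequence map induced by a contractive linear map. -/
def mapBdd (T : A →ₗ[ℂ] B) (hT : ∀ x, ‖T x‖ ≤ ‖x‖) (f : BddSeq A) : BddSeq B :=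
  ⟨fun n => T ((f : ℕ → A) n), by
    obtain ⟨C, hC⟩ := f.2
    exact ⟨C, fun n => (hT _).trans (hC n)⟩⟩

/-- The map `A^∞ → B^∞` induced componentwise by a contractive linear map `A → B`. -/
def mapSeq (T : A →ₗ[ℂ] B) (hT : ∀ x, ‖T x‖ ≤ ‖x‖) : SeqAlg A →ₗ[ℂ] SeqAlg B where
  toFun := Quotient.map' (mapBdd T hT) (by
    intro f g hfg
    refine (nullIdeal B).rel_of _ _ ?_
    have hmem := (mem_nullIdeal_iff A _).mp ((nullIdeal A).mem_of_rel hfg)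
    rw [mem_nullIdeal_iff]
    refine squeeze_zero (fun n => norm_nonneg _) (fun n => ?_) hmem
    show ‖T ((f : ℕ → A) n) - T ((g : ℕ → A) n)‖ ≤ _
    rw [← map_sub]
    exact hT _)
  map_add' := by
    rintro ⟨f⟩ ⟨g⟩
    exact congrArg (nullIdeal B).mkq (by ext n; exact map_add T _ _)
  map_smul' := by
    rintro c ⟨f⟩
    exact congrArg (nullIdeal B).mkq (by ext n; exact map_smul T c _)

/-- The contractive linear map underlying a star algebra homomorphism. -/
def starHomLin (φ : A →⋆ₐ[ℂ] B) : A →ₗ[ℂ] B := φ.toAlgHom.toLinearMap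

/-- The map `A^∞ → B^∞` induced by a star algebra homomorphism `A → B`. -/
def mapSeqHom (φ : A →⋆ₐ[ℂ] B) : SeqAlg A → SeqAlg B :=
  mapSeq (starHomLin φ) (fun x => NonUnitalStarAlgHom.norm_apply_le φ x)

/-- A projection in a star ring. -/
def IsProjection {R : Type w} [Mul R] [Star R] (p : R) : Prop := p * p = p ∧ star p = p

/-- A unitary element of a unital star ring. -/
def IsUnitaryElem {R : Type w} [Monoid R] [Star R] (u : R) : Prop :=
  star u * u = 1 ∧ u * star u = 1

end Seq

/-! ### Conditional expectations, quasi-bases and the Rokhlin property for inclusions -/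

section CondExp

variable {P A : Type u} [CStarAlgebra P] [CStarAlgebra A]

/-- A (faithful) conditional expectation onto a unital C*-subalgebra `P ⊆ A`, where the
inclusion is recorded by a unital star-algebra embedding `ι : P → A`. -/
structure CondExpectation (ι : P →⋆ₐ[ℂ] A) where
  toFun : A →ₗ[ℂ] P
  contractive : ∀ x : A, ‖toFun x‖ ≤ ‖x‖
  positive : ∀ x : A, ∃ y : P, toFun (star x * x) = star y * y
  fixes : ∀ p : P, toFun (ι p) = p
  bimodule : ∀ (p q : P) (x : A), toFun (ι p * x * ι q) = p * toFun x * q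

variable {ι : P →⋆ₐ[ℂ] A}

/-- Faithfulness of a conditional expectation. -/
def CondExpectation.Faithful (E : CondExpectation ι) : Prop :=
  ∀ x : A, E.toFun (star x * x) = 0 → x = 0

/-- A quasi-basis `{(uᵢ, uᵢ*)}` for a conditional expectation, in the sense of Watatani. -/
def CondExpectation.IsQuasiBasis (E : CondExpectation ι) {n : ℕ} (u : Fin n → A) : Prop :=
  ∀ x : A, ∑ i, ι (E.toFun (x * u i)) * star (u i) = x

/-- A conditional expectation is of index-finite type if it admits a quasi-basis. -/
def CondExpectation.IndexFiniteType (E : CondExpectation ι) : Prop :=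
  ∃ (n : ℕ) (u : Fin n → A), E.IsQuasiBasis u

/-- The Watatani index `Index E = ∑ᵢ uᵢ uᵢ*` associated to a quasi-basis. -/
def indexElt {n : ℕ} (u : Fin n → A) : A := ∑ i, u i * star (u i)

/-- `E` composed with the inclusion, as a contractive linear map `A → A`. -/
def CondExpectation.selfMap (E : CondExpectation ι) : A →ₗ[ℂ] A :=
  (starHomLin ι).comp E.toFun

lemma CondExpectation.selfMap_contractive (E : CondExpectation ι) (x : A) :
    ‖E.selfMap x‖ ≤ ‖x‖ :=
  (NonUnitalStarAlgHom.norm_apply_le ι (E.toFun x)).trans (E.contractive x)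

/-- The Rokhlin property for a conditional expectation of index-finite type (Kodaka–Osaka–Teruya):
there is a projection `e` in the central sequence algebra `A_∞ = A^∞ ∩ A'` with
`E^∞(e) = (Index E)⁻¹ · 1` such that `x ↦ xe` is injective on `A`. -/
def CondExpectation.RokhlinProperty (E : CondExpectation ι) : Prop :=
  ∃ (n : ℕ) (u : Fin n → A), E.IsQuasiBasis u ∧
    ∃ e : SeqAlg A, IsProjection e ∧ (∀ a : A, Commute (constSeq A a) e) ∧
      constSeq A (indexElt u) * mapSeq E.selfMap E.selfMap_contractive e = 1 ∧
      mapSeq E.selfMap E.selfMap_contractive e * constSeq A (indexElt u) = 1 ∧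
      ∀ x : A, constSeq A x * e = 0 → x = 0

end CondExp

/-! ### Minimal tensor products, `D`-absorption, strongly self-absorbing algebras -/

section Tensor

/-- `T`, together with the pair of commuting unital embeddings `jA : A → T`, `jB : B → T`,
is a realization of the minimal (spatial) tensor product `A ⊗min B`:  the induced map from the
algebraic tensor product `A ⊙ B` is injective with dense range, and the norm induced on `A ⊙ B`
is dominated by the norm induced by every other C*-algebra containing `A ⊙ B` via a commuting
pair of star homomorphisms. -/
structure IsMinTensorProduct (A B T : Type u) [CStarAlgebra A] [CStarAlgebra B] [CStarAlgebra T]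
    (jA : A →⋆ₐ[ℂ] T) (jB : B →⋆ₐ[ℂ] T) : Prop where
  commute : ∀ (a : A) (b : B), Commute (jA a) (jB b)
  injective : Function.Injective
    (Algebra.TensorProduct.lift jA.toAlgHom jB.toAlgHom commute)
  dense : DenseRange (Algebra.TensorProduct.lift jA.toAlgHom jB.toAlgHom commute)
  minimal : ∀ (S : Type u) [CStarAlgebra S] (iA : A →⋆ₐ[ℂ] S) (iB : B →⋆ₐ[ℂ] S)
    (hc : ∀ (a : A) (b : B), Commute (iA a) (iB b)),
    Function.Injective (Algebra.TensorProduct.lift iA.toAlgHom iB.toAlgHom hc) →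
    ∀ x : TensorProduct ℂ A B,
      ‖Algebra.TensorProduct.lift jA.toAlgHom jB.toAlgHom commute x‖ ≤
        ‖Algebra.TensorProduct.lift iA.toAlgHom iB.toAlgHom hc x‖

/-- A C*-algebra `A` absorbs `D` if `A ⊗min D ≅ A`; equivalently, `A` itself carries the
structure of a minimal tensor product of `A` and `D`. -/
def DAbsorbing (D A : Type u) [CStarAlgebra D] [CStarAlgebra A] : Prop :=
  ∃ (jA : A →⋆ₐ[ℂ] A) (jD : D →⋆ₐ[ℂ] A), IsMinTensorProduct A D A jA jD

/-- Approximate unitary equivalence of two maps, witnessed by a sequence of unitaries. -/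
def ApproxUnitEquiv {A B : Type u} [CStarAlgebra A] [CStarAlgebra B] (f g : A → B) : Prop :=
  ∃ v : ℕ → B, (∀ n, IsUnitaryElem (v n)) ∧
    ∀ a : A, Tendsto (fun n => ‖star (v n) * f a * v n - g a‖) atTop (𝓝 0)

/-- A separable unital C*-algebra `D ≠ ℂ` is strongly self-absorbing if there is an isomorphism
`D ≅ D ⊗min D` which is approximately unitarily equivalent to the first-factor embedding
`d ↦ d ⊗ 1`. (Here `D ⊗min D` is realized on `D` itself via a commuting pair `j₁, j₂`.) -/
def StronglySelfAbsorbing (D : Type u) [CStarAlgebra D] : Prop :=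
  TopologicalSpace.SeparableSpace D ∧ (¬ Nonempty (D ≃⋆ₐ[ℂ] ℂ)) ∧
    ∃ (j₁ j₂ : D →⋆ₐ[ℂ] D), IsMinTensorProduct D D D j₁ j₂ ∧
      ∃ φ : D ≃⋆ₐ[ℂ] D, ApproxUnitEquiv (fun d => j₁ d) (fun d => φ d)

end Tensor

/-! ### Finite group actions, the Rokhlin property and crossed products -/

section Action

/-- The group of star-algebra automorphisms of `A`, with composition as multiplication. -/
instance starAlgAutGroup (A : Type u) [CStarAlgebra A] : Group (A ≃⋆ₐ[ℂ] A) where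
  mul e f := f.trans e
  one := StarAlgEquiv.refl ℂ A
  inv := StarAlgEquiv.symm
  mul_assoc e f g := StarAlgEquiv.ext fun _ => rfl
  one_mul e := StarAlgEquiv.ext fun _ => rfl
  mul_one e := StarAlgEquiv.ext fun _ => rfl
  inv_mul_cancel e := StarAlgEquiv.ext fun x => e.symm_apply_apply x

variable {G : Type w} [Group G] [Fintype G] {A : Type u} [CStarAlgebra A]

/-- The map `A^∞ → A^∞` induced by the automorphism `α g`. -/
def actionSeq (α : G →* (A ≃⋆ₐ[ℂ] A)) (g : G) : SeqAlg A → SeqAlg A :=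
  mapSeqHom ((α g : A ≃⋆ₐ[ℂ] A) : A →⋆ₐ[ℂ] A)

/-- The Rokhlin property (Izumi) for an action of a finite group `G` on a unital C*-algebra:
a partition of unity of projections `{e_g} ⊆ A_∞` with `(α_g)_∞(e_h) = e_{gh}`. -/
def ActionRokhlin (α : G →* (A ≃⋆ₐ[ℂ] A)) : Prop :=
  ∃ e : G → SeqAlg A, (∀ g, IsProjection (e g)) ∧ (∑ g, e g = 1) ∧
    (∀ (g : G) (a : A), Commute (constSeq A a) (e g)) ∧
    (∀ g h : G, actionSeq α g (e h) = e (g * h))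

/-- `B` is (a realization of) the crossed product `A ⋊_α G` for an action `α` of a finite
group `G`:  it contains a covariant pair `(π, U)` whose products `π(a)U_g` span a dense
subspace, and it carries a faithful positive canonical conditional expectation onto `π(A)`. -/
structure IsCrossedProduct (α : G →* (A ≃⋆ₐ[ℂ] A)) (B : Type u) [CStarAlgebra B] : Prop where
  out : ∃ (π : A →⋆ₐ[ℂ] B) (U : G → B),
    Function.Injective π ∧
    (∀ g, IsUnitaryElem (U g)) ∧ U 1 = 1 ∧ (∀ g h, U g * U h = U (g * h)) ∧
    (∀ (g : G) (a : A), U g * π a * star (U g) = π (α g a)) ∧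
    Dense (↑(Submodule.span ℂ {b : B | ∃ (a : A) (g : G), b = π a * U g}) : Set B) ∧
    ∃ E : B →ₗ[ℂ] B, (∀ b, ‖E b‖ ≤ ‖b‖) ∧
      (∀ a : A, E (π a * U 1) = π a) ∧
      (∀ (a : A) (g : G), g ≠ 1 → E (π a * U g) = 0) ∧
      (∀ b : B, ∃ a : A, E (star b * b) = π (star a * a)) ∧
      (∀ b : B, E (star b * b) = 0 → b = 0)

end Action

/-! ### Various classes of C*-algebras -/

section Classes

variable (A : Type u) [CStarAlgebra A]

/-- A UHF algebra, via Glimm's local characterization: a separable unital C*-algebra which is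
locally approximated by unital copies of full matrix algebras. -/
def IsUHF : Prop :=
  TopologicalSpace.SeparableSpace A ∧
    ∀ (s : Finset A) (ε : ℝ), 0 < ε →
      ∃ k : ℕ, 0 < k ∧ ∃ φ : Matrix (Fin k) (Fin k) ℂ →⋆ₐ[ℂ] A,
        ∀ a ∈ s, ∃ m, ‖a - φ m‖ < ε

/-- The universal UHF algebra `U_∞` (supernatural number `∏ p^∞`): the UHF algebra into which
every full matrix algebra embeds unitally. -/
def IsUnivUHF : Prop :=
  IsUHF A ∧ ∀ k : ℕ, 0 < k → Nonempty (Matrix (Fin k) (Fin k) ℂ →⋆ₐ[ℂ] A)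

/-- The Cuntz algebra `O₂`: `A` is generated by two isometries `s₁, s₂` with
`s₁s₁* + s₂s₂* = 1` (by Cuntz's theorem such an algebra is unique up to isomorphism). -/
def IsCuntzO2 : Prop :=
  ∃ s₁ s₂ : A, star s₁ * s₁ = 1 ∧ star s₂ * s₂ = 1 ∧ s₁ * star s₁ + s₂ * star s₂ = 1 ∧
    (StarAlgebra.adjoin ℂ {s₁, s₂}).topologicalClosure = ⊤

/-- The Cuntz algebra `O_∞`: `A` is generated by a sequence of isometries with mutually
orthogonal range projections. -/
def IsCuntzOInf : Prop :=
  ∃ s : ℕ → A, (∀ i, star (s i) * s i = 1) ∧ (∀ i j, i ≠ j → star (s i) * s j = 0) ∧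
    (StarAlgebra.adjoin ℂ (Set.range s)).topologicalClosure = ⊤

/-- An AF algebra: a separable C*-algebra locally approximated by finite-dimensional
C*-subalgebras. -/
def IsAF : Prop :=
  TopologicalSpace.SeparableSpace A ∧
    ∀ (s : Finset A) (ε : ℝ), 0 < ε →
      ∃ S : StarSubalgebra ℂ A, FiniteDimensional ℂ S ∧ ∀ a ∈ s, ∃ b ∈ S, ‖a - b‖ < ε

/-- A simple C*-algebra: no nontrivial closed two-sided ideals. -/
def IsSimpleCStar : Prop :=
  Nontrivial A ∧ ∀ I : TwoSidedIdeal A, IsClosed (I : Set A) →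
    (I : Set A) = {0} ∨ (I : Set A) = Set.univ

/-- Semiprojectivity in the sense of Blackadar: every morphism into an inductive-limit quotient
`C/J`, where `J` is the closure of an increasing chain of (star-closed, closed two-sided)
ideals `Jₙ`, lifts to some `C/Jₙ`. -/
def SemiProjective : Prop :=
  ∀ (C : Type u) [CStarAlgebra C] (J : ℕ → StarIdeal C),
    (∀ n, IsClosed ((J n).toTwoSidedIdeal : Set C)) →
    (∀ (n : ℕ) (x : C), x ∈ (J n).toTwoSidedIdeal → x ∈ (J (n + 1)).toTwoSidedIdeal) →
    ∀ (Jtop : StarIdeal C),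
      (Jtop.toTwoSidedIdeal : Set C)
        = closure (⋃ n, ((J n).toTwoSidedIdeal : Set C)) →
      ∀ φ : A →⋆ₐ[ℂ] Jtop.Quot,
        ∃ (n : ℕ) (hle : ∀ x : C, x ∈ (J n).toTwoSidedIdeal → x ∈ Jtop.toTwoSidedIdeal)
          (ψ : A →⋆ₐ[ℂ] (J n).Quot),
          ∀ a : A, StarIdeal.quotMap hle (ψ a) = φ a

/-- A completely positive map between C*-algebras: all matrix amplifications are positive. -/
def CompletelyPositive {A B : Type u} [CStarAlgebra A] [CStarAlgebra B] (φ : A →ₗ[ℂ] B) : Prop :=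
  ∀ (n : ℕ) (x : Matrix (Fin n) (Fin n) A),
    (∃ y : Matrix (Fin n) (Fin n) A, x = star y * y) →
      ∃ z : Matrix (Fin n) (Fin n) B, x.map ⇑φ = star z * z

/-- Nuclearity, via the completely positive approximation property: the identity map is a
pointwise-norm limit of finite-rank completely positive contractions. -/
def IsNuclearCStar : Prop :=
  ∀ (s : Finset A) (ε : ℝ), 0 < ε →
    ∃ φ : A →ₗ[ℂ] A, CompletelyPositive φ ∧ (∀ x, ‖φ x‖ ≤ ‖x‖) ∧
      FiniteDimensional ℂ ↥(LinearMap.range φ) ∧ ∀ a ∈ s, ‖φ a - a‖ < ε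

/-- Approximate divisibility: some finite-dimensional C*-algebra with no abelian summands
(i.e. a direct sum of matrix algebras `M_{kᵢ}` with all `kᵢ ≥ 2`) embeds unitally into
`A' ∩ A^∞`. -/
def ApproxDivisible : Prop :=
  ∃ (m : ℕ) (k : Fin m → ℕ), 0 < m ∧ (∀ i, 2 ≤ k i) ∧
    ∃ ψ : (Π i, Matrix (Fin (k i)) (Fin (k i)) ℂ) →⋆ₐ[ℂ] SeqAlg A,
      Function.Injective ψ ∧ ∀ b a, Commute (ψ b) (constSeq A a)

/-- `A` has approximately inner half flip:  in (any realization of) `A ⊗min A` the two factor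
embeddings are approximately unitarily equivalent. -/
def ApproxInnerHalfFlip : Prop :=
  ∀ (T : Type u) [CStarAlgebra T] (j₁ j₂ : A →⋆ₐ[ℂ] T),
    IsMinTensorProduct A A T j₁ j₂ →
    ApproxUnitEquiv (fun a => j₁ a) (fun a => j₂ a)

end Classes

/-! ### The tracial Rokhlin property -/

section Tracial

variable {G : Type w} [Group G] [Fintype G] {A : Type u} [CStarAlgebra A]

/-- The tracial Rokhlin property (Phillips) for a finite group action. -/
def TracialRokhlin (α : G →* (A ≃⋆ₐ[ℂ] A)) : Prop :=
  ∀ (s : Finset A) (ε : ℝ), 0 < ε → ∀ x : A, (∃ y, x = star y * y) → x ≠ 0 →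
    ∃ e : G → A, (∀ g, IsProjection (e g)) ∧
      (∀ g h, g ≠ h → e g * e h = 0) ∧
      (∀ g h : G, ‖α g (e h) - e (g * h)‖ < ε) ∧
      (∀ g : G, ∀ a ∈ s, ‖e g * a - a * e g‖ < ε) ∧
      ∃ v : A, star v * v = 1 - ∑ g, e g ∧ IsProjection (v * star v) ∧
        v * star v ∈ closure {b : A | ∃ a : A, b = x * a * x}

end Tracial

/-! ### Crossed products by `ℤ` and the Bunce–Deddens algebra -/

section ZCrossed

variable {A : Type v} [CStarAlgebra A]

/-- `B` is (a realization of) the crossed product `A ⋊_θ ℤ` of a single automorphism,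
characterized by a covariant pair with dense span of `π(a)Uⁿ` together with a faithful
positive expectation onto `π(A)` killing all `π(a)Uⁿ`, `n ≠ 0`. -/
structure IsZCrossedProduct (θ : A ≃⋆ₐ[ℂ] A) (B : Type u) [CStarAlgebra B] : Prop where
  out : ∃ (π : A →⋆ₐ[ℂ] B) (U : ℤ → B),
    Function.Injective π ∧
    (∀ n, IsUnitaryElem (U n)) ∧ U 0 = 1 ∧ (∀ m n, U m * U n = U (m + n)) ∧
    (∀ a : A, U 1 * π a * star (U 1) = π (θ a)) ∧
    Dense (↑(Submodule.span ℂ {b : B | ∃ (a : A) (n : ℤ), b = π a * U n}) : Set B) ∧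
    ∃ E : B →ₗ[ℂ] B, (∀ b, ‖E b‖ ≤ ‖b‖) ∧
      (∀ a : A, E (π a * U 0) = π a) ∧
      (∀ (a : A) (n : ℤ), n ≠ 0 → E (π a * U n) = 0) ∧
      (∀ b : B, ∃ a : A, E (star b * b) = π (star a * a)) ∧
      (∀ b : B, E (star b * b) = 0 → b = 0)

/-- The Bunce–Deddens algebra of type `2^∞`, realized as the crossed product
`C(ℤ₂) ⋊ ℤ` of the 2-adic odometer. -/
def IsBunceDeddens2 (B : Type u) [CStarAlgebra B] : Prop :=
  ∃ θ : C(ℤ_[2], ℂ) ≃⋆ₐ[ℂ] C(ℤ_[2], ℂ),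
    (∀ (f : C(ℤ_[2], ℂ)) (x : ℤ_[2]), θ f x = f (x + 1)) ∧ IsZCrossedProduct θ B

end ZCrossed

/-! ### Bundled C*-algebras, finitely saturated classes, local classes -/

section Bundle

/-- A bundled (unital) C*-algebra. -/
structure CStarBundle : Type (u + 1) where
  carrier : Type u
  [inst : CStarAlgebra carrier]

attribute [instance] CStarBundle.inst

instance : CoeSort CStarBundle.{u} (Type u) := ⟨CStarBundle.carrier⟩

/-- A class of C*-algebras is finitely saturated if it is closed under isomorphism,
finite direct sums, matrix amplification, and corners by nonzero projections. -/
def FinitelySaturated (Q : CStarBundle.{u} → Prop) : Prop :=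
  (∀ X Y : CStarBundle.{u}, Q X → Nonempty (Y.carrier ≃⋆ₐ[ℂ] X.carrier) → Q Y) ∧
  (∀ (n : ℕ) (F : Fin n → CStarBundle.{u}), (∀ i, Q (F i)) →
    Q ⟨Π i, (F i).carrier⟩) ∧
  (∀ (n : ℕ), 0 < n → ∀ X Y : CStarBundle.{u}, Q X →
    Nonempty (Y.carrier ≃⋆ₐ[ℂ] Matrix (Fin n) (Fin n) X.carrier) → Q Y) ∧
  (∀ X : CStarBundle.{u}, Q X → ∀ p : X.carrier, IsProjection p → p ≠ 0 →
    ∀ Y : CStarBundle.{u}, ∀ j : Y.carrier →⋆ₙₐ[ℂ] X.carrier, Function.Injective j →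
      Set.range j = {x : X.carrier | ∃ a : X.carrier, x = p * a * p} → Q Y)

/-- The finite saturation of a class: the smallest finitely saturated class containing it. -/
def FinSaturation (C : CStarBundle.{u} → Prop) (X : CStarBundle.{u}) : Prop :=
  ∀ Q : CStarBundle.{u} → Prop, FinitelySaturated Q → (∀ Y, C Y → Q Y) → Q X

/-- A unital local `C`-algebra: every finite subset is approximately contained in the image of
a unital *-homomorphism from a member of the finite saturation of `C`. -/
def IsLocalClassAlgebra (C : CStarBundle.{u} → Prop) (A : Type u) [CStarAlgebra A] : Prop :=
  ∀ (s : Finset A) (ε : ℝ), 0 < ε →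
    ∃ X : CStarBundle.{u}, FinSaturation C X ∧
      ∃ φ : X.carrier →⋆ₐ[ℂ] A, ∀ a ∈ s, ∃ b : X.carrier, ‖a - φ b‖ < ε

end Bundle

/-! ### Averaging expectations for finite group actions and their subgroups -/

section Average

variable {G : Type w} [Group G] [Fintype G] {A : Type u} [CStarAlgebra A]

/-- The canonical conditional expectation onto the fixed point algebra of a subgroup `H ≤ G`:
`E_H(x) = |H|⁻¹ ∑_{h ∈ H} α_h(x)`, as a linear map `A → A`. -/
def subgroupAvg (α : G →* (A ≃⋆ₐ[ℂ] A)) (H : Subgroup G) [Fintype H] : A →ₗ[ℂ] A where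
  toFun x := (Fintype.card H : ℂ)⁻¹ • ∑ h : H, α (h : G) x
  map_add' x y := by
    simp only [map_add, Finset.sum_add_distrib, smul_add]
  map_smul' c x := by
    simp only [map_smul, RingHom.id_apply, ← Finset.smul_sum]
    rw [smul_comm]

lemma subgroupAvg_contractive (α : G →* (A ≃⋆ₐ[ℂ] A)) (H : Subgroup G) [Fintype H] (x : A) :
    ‖subgroupAvg α H x‖ ≤ ‖x‖ := by
  have h1 : ‖∑ h : H, α (h : G) x‖ ≤ (Fintype.card H : ℝ) * ‖x‖ := by
    calc ‖∑ h : H, α (h : G) x‖ ≤ ∑ _h : H, ‖x‖ := by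
          refine (norm_sum_le _ _).trans (Finset.sum_le_sum fun h _ => ?_)
          exact NonUnitalStarAlgHom.norm_apply_le (α (h : G)) x
      _ = (Fintype.card H : ℝ) * ‖x‖ := by
          simp [Finset.sum_const, Finset.card_univ, nsmul_eq_mul]
  have h0 : (0 : ℝ) < (Fintype.card H : ℝ) := by
    exact_mod_cast Fintype.card_pos
  calc ‖subgroupAvg α H x‖ = ‖(Fintype.card H : ℂ)⁻¹‖ * ‖∑ h : H, α (h : G) x‖ := by
        rw [subgroupAvg]; exact norm_smul _ _
    _ ≤ ((Fintype.card H : ℝ))⁻¹ * ((Fintype.card H : ℝ) * ‖x‖) := by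
        apply mul_le_mul _ h1 (norm_nonneg _) (by positivity)
        simp
    _ = ‖x‖ := by field_simp
/-- The canonical conditional expectation onto the fixed point algebra of `G`:
`E(x) = |G|⁻¹ ∑_{g ∈ G} α_g(x)`, as a linear map `A → A`. -/
def groupAvg (α : G →* (A ≃⋆ₐ[ℂ] A)) : A →ₗ[ℂ] A where
  toFun x := (Fintype.card G : ℂ)⁻¹ • ∑ g : G, α g x
  map_add' x y := by
    simp only [map_add, Finset.sum_add_distrib, smul_add]
  map_smul' c x := by
    simp only [map_smul, RingHom.id_apply, ← Finset.smul_sum]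
    rw [smul_comm]

lemma groupAvg_contractive (α : G →* (A ≃⋆ₐ[ℂ] A)) (x : A) :
    ‖groupAvg α x‖ ≤ ‖x‖ := by
  have h1 : ‖∑ g : G, α g x‖ ≤ (Fintype.card G : ℝ) * ‖x‖ := by
    calc ‖∑ g : G, α g x‖ ≤ ∑ _g : G, ‖x‖ := by
          refine (norm_sum_le _ _).trans (Finset.sum_le_sum fun g _ => ?_)
          exact NonUnitalStarAlgHom.norm_apply_le (α g) x
      _ = (Fintype.card G : ℝ) * ‖x‖ := by
          simp [Finset.sum_const, Finset.card_univ, nsmul_eq_mul]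
  have h0 : (0 : ℝ) < (Fintype.card G : ℝ) := by exact_mod_cast Fintype.card_pos
  calc ‖groupAvg α x‖ = ‖(Fintype.card G : ℂ)⁻¹‖ * ‖∑ g : G, α g x‖ := by
        rw [groupAvg]; exact norm_smul _ _
    _ ≤ ((Fintype.card G : ℝ))⁻¹ * ((Fintype.card G : ℝ) * ‖x‖) := by
        apply mul_le_mul _ h1 (norm_nonneg _) (by positivity)
        simp
    _ = ‖x‖ := by field_simp

end Average


/-!
The index `Index E = ∑ uᵢ uᵢ*` of a quasi-basis is central in `A`, so simplicity of `A` makes it a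
scalar `μ`. For a Rokhlin projection `e`, the map `ρ x = μ E^∞(x e)` satisfies `x e = ρ(x) e`:
the defects `Dᵢ = uᵢ e - ρ(uᵢ) e` have `∑ E^∞(Dᵢ Dᵢ*) = μ E^∞(e) - μ E^∞(e) = 0`, and the
Pimsner–Popa inequality `‖x‖ ≤ (∑ ‖uᵢ‖²) ‖E(x x*)‖^{1/2}` makes `E^∞` faithful on such sums.
Hence `ρ` is multiplicative, and evaluating it on a representative of `e` gives asymptotically
multiplicative maps `ψₘ : A → P` with `ψₘ(p) = p ψₘ(1) → p`. A closed ideal `I` of `P` pulls back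
to the closed ideal `{a | dist(ψₘ a, I) → 0}` of `A`, which contains `I`; as it is `0` or `A`,
`I` is `0` or `P`.
-/

attribute [local instance] CStarAlgebra.spectralOrder CStarAlgebra.spectralOrderedRing

namespace SeqAlg

variable {A : Type u} [CStarAlgebra A]

def mk : BddSeq A →+* SeqAlg A := (nullIdeal A).mkq

lemma mk_surjective : Function.Surjective (mk : BddSeq A → SeqAlg A) :=
  Quotient.exists_rep

lemma mk_star (f : BddSeq A) : mk (star f) = star (mk f) := rfl

lemma mk_smul (c : ℂ) (f : BddSeq A) : mk (c • f) = c • mk f := rfl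

lemma mk_eq_zero_iff {f : BddSeq A} : mk f = 0 ↔ Tendsto (f : ℕ → A) atTop (𝓝 0) := by
  rw [tendsto_zero_iff_norm_tendsto_zero, ← mem_nullIdeal_iff, ← map_zero mk]
  exact ⟨fun h => by simpa using (nullIdeal A).mem_of_rel (Quotient.eq''.mp h),
    fun h => Quotient.sound' ((nullIdeal A).rel_of _ _ (by simpa using h))⟩

lemma constSeq_eq_mk (a : A) : constSeq A a = mk (constBdd a) := rfl

instance : StarModule ℂ (SeqAlg A) where
  star_smul c w := by
    obtain ⟨f, rfl⟩ := mk_surjective w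
    rw [← mk_smul, ← mk_star, ← mk_star, ← mk_smul]
    exact congrArg mk (Subtype.ext (funext fun m => star_smul c ((f : ℕ → A) m)))

section mapSeq

variable {B : Type u} [CStarAlgebra B] (T : A →ₗ[ℂ] B) (hT : ∀ x, ‖T x‖ ≤ ‖x‖)

lemma mapSeq_mk (f : BddSeq A) : mapSeq T hT (mk f) = mk (mapBdd T hT f) := rfl

lemma mapSeq_constSeq (a : A) : mapSeq T hT (constSeq A a) = constSeq B (T a) := rfl

lemma mapSeq_star (h : ∀ x, T (star x) = star (T x)) (w : SeqAlg A) :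
    mapSeq T hT (star w) = star (mapSeq T hT w) := by
  obtain ⟨f, rfl⟩ := mk_surjective w
  exact congrArg mk (Subtype.ext (funext fun m => h _))

end mapSeq

variable (T : A →ₗ[ℂ] A) (hT : ∀ x, ‖T x‖ ≤ ‖x‖)

lemma mapSeq_mapSeq_mul (h : ∀ x y, T (T x * y) = T x * T y) (v w : SeqAlg A) :
    mapSeq T hT (mapSeq T hT v * w) = mapSeq T hT v * mapSeq T hT w := by
  obtain ⟨f, rfl⟩ := mk_surjective v
  obtain ⟨g, rfl⟩ := mk_surjective w
  exact congrArg mk (Subtype.ext (funext fun m => h _ _))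

lemma mapSeq_mul_mapSeq (h : ∀ x y, T (y * T x) = T y * T x) (v w : SeqAlg A) :
    mapSeq T hT (w * mapSeq T hT v) = mapSeq T hT w * mapSeq T hT v := by
  obtain ⟨f, rfl⟩ := mk_surjective v
  obtain ⟨g, rfl⟩ := mk_surjective w
  exact congrArg mk (Subtype.ext (funext fun m => h _ _))

lemma sum_mapSeq_mul_constSeq {ι : Type*} [Fintype ι] {u v : ι → A}
    (h : ∀ x, ∑ i, T (x * u i) * v i = x) (w : SeqAlg A) :
    ∑ i, mapSeq T hT (w * constSeq A (u i)) * constSeq A (v i) = w := by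
  obtain ⟨f, rfl⟩ := mk_surjective w
  simp only [constSeq_eq_mk, ← map_mul, mapSeq_mk, ← map_sum]
  refine congrArg mk (Subtype.ext (funext fun m => ?_))
  simpa [Finset.sum_apply, mapBdd, constBdd] using h ((f : ℕ → A) m)

end SeqAlg

namespace TwoSidedIdeal

section TopologicalRing

variable {R : Type*} [Ring R] [TopologicalSpace R] [IsTopologicalRing R]

def topologicalClosure (I : TwoSidedIdeal R) : TwoSidedIdeal R :=
  .mk' (closure I) (subset_closure I.zero_mem)
    (fun hx hy => map_mem_closure₂ continuous_add hx hy fun _ ha _ hb => I.add_mem ha hb)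
    (fun hx => map_mem_closure continuous_neg hx fun _ ha => I.neg_mem ha)
    (fun {x _} hy => map_mem_closure (continuous_const_mul x) hy fun _ hb =>
      I.mul_mem_left _ _ hb)
    (fun {_ y} hx => map_mem_closure (f := (· * y)) (continuous_mul_const y) hx fun _ ha =>
      I.mul_mem_right _ _ ha)

lemma coe_topologicalClosure (I : TwoSidedIdeal R) :
    (I.topologicalClosure : Set R) = closure I := by
  unfold topologicalClosure
  exact coe_mk' ..

end TopologicalRing


section NormedRing

open Metric

variable {R : Type*} [NormedRing R] (I : TwoSidedIdeal R)

lemma infDist_add_le (x y : R) : infDist (x + y) I ≤ infDist x I + infDist y I := by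
  simpa [← QuotientAddGroup.mk_add, QuotientAddGroup.norm_mk] using
    norm_add_le (x : R ⧸ I.asIdeal.toAddSubgroup) (y : R ⧸ I.asIdeal.toAddSubgroup)

lemma infDist_neg (x : R) : infDist (-x) I = infDist x I := by
  simpa [← QuotientAddGroup.mk_neg, QuotientAddGroup.norm_mk] using
    norm_neg (x : R ⧸ I.asIdeal.toAddSubgroup)

lemma infDist_mul_le_norm_mul (x y : R) : infDist (x * y) I ≤ ‖x‖ * infDist y I := by
  have : Nonempty (I : Set R) := ⟨⟨0, I.zero_mem⟩⟩
  rw [infDist_eq_iInf (x := y), Real.mul_iInf_of_nonneg (norm_nonneg x)]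
  refine le_ciInf fun s => (infDist_le_dist_of_mem (I.mul_mem_left x _ s.2)).trans ?_
  rw [dist_eq_norm, dist_eq_norm, ← mul_sub]
  exact norm_mul_le _ _

lemma infDist_mul_le_mul_norm (x y : R) : infDist (x * y) I ≤ infDist x I * ‖y‖ := by
  have : Nonempty (I : Set R) := ⟨⟨0, I.zero_mem⟩⟩
  rw [infDist_eq_iInf (x := x), mul_comm, Real.mul_iInf_of_nonneg (norm_nonneg y)]
  refine le_ciInf fun s => (infDist_le_dist_of_mem (I.mul_mem_right _ y s.2)).trans ?_
  rw [dist_eq_norm, dist_eq_norm, ← sub_mul, mul_comm]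
  exact norm_mul_le _ _

end NormedRing

end TwoSidedIdeal

namespace IsSimpleCStar

variable {A : Type u} [CStarAlgebra A]

lemma one_mem (hA : IsSimpleCStar A) {I : TwoSidedIdeal A} {x : A} (hx : x ∈ I) (hx0 : x ≠ 0) :
    (1 : A) ∈ I := by
  rcases hA.2 I.topologicalClosure (by simp [I.coe_topologicalClosure]) with h0 | htop
  · have hxc : x ∈ (I.topologicalClosure : Set A) := by
      rw [I.coe_topologicalClosure]; exact subset_closure hx
    rw [h0] at hxc
    exact absurd hxc hx0
  · have h1 : (1 : A) ∈ closure (I : Set A) := by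
      simp [← I.coe_topologicalClosure, htop]
    obtain ⟨y, hyU, hyI⟩ := mem_closure_iff.mp h1 _ Units.isOpen isUnit_one
    simpa [hyU.val_inv_mul] using I.mul_mem_left (hyU.unit⁻¹ : Aˣ) y hyI

lemma exists_eq_algebraMap_of_commute (hA : IsSimpleCStar A) {z : A} (hz : ∀ a, Commute z a) :
    ∃ μ : ℂ, z = algebraMap ℂ A μ := by
  have := hA.1
  obtain ⟨μ, hμ⟩ := spectrum.nonempty z
  refine ⟨μ, ?_⟩
  set d := algebraMap ℂ A μ - z
  have hd (a : A) : Commute d a := (Algebra.commute_algebraMap_left μ a).sub_left (hz a)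
  by_contra hne
  let J : TwoSidedIdeal A := .mk' (Set.range (· * d)) ⟨0, zero_mul d⟩
    (by rintro _ _ ⟨a, rfl⟩ ⟨b, rfl⟩; exact ⟨a + b, add_mul a b d⟩)
    (by rintro _ ⟨a, rfl⟩; exact ⟨-a, neg_mul a d⟩)
    (by rintro x _ ⟨a, rfl⟩; exact ⟨x * a, mul_assoc x a d⟩)
    (by rintro _ y ⟨a, rfl⟩; exact ⟨a * y, by simp only [mul_assoc, (hd y).eq]⟩)
  obtain ⟨a, had⟩ := (TwoSidedIdeal.mem_mk' ..).mp <|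
    hA.one_mem (I := J) ((TwoSidedIdeal.mem_mk' ..).mpr ⟨1, one_mul d⟩)
      (sub_ne_zero.mpr (Ne.symm hne))
  exact spectrum.mem_iff.mp hμ (isUnit_iff_exists.mpr ⟨a, (hd a).eq.trans had, had⟩)

end IsSimpleCStar

structure IsAsymptoticHom {A R : Type*} [NormedRing A] [NormedRing R] (ψ : ℕ → A →+ R) :
    Prop where
  exists_bound : ∃ C, ∀ m x, ‖ψ m x‖ ≤ C * ‖x‖
  tendsto_map_mul : ∀ x y, Tendsto (fun m => ψ m (x * y) - ψ m x * ψ m y) atTop (𝓝 0)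

namespace IsAsymptoticHom

open Metric

variable {A R : Type*} [NormedRing A] [NormedRing R] {ψ : ℕ → A →+ R}

lemma tendsto_infDist_mul_left (hψ : IsAsymptoticHom ψ) (I : TwoSidedIdeal R) (x : A) {a : A}
    (ha : Tendsto (fun m => infDist (ψ m a) I) atTop (𝓝 0)) :
    Tendsto (fun m => infDist (ψ m (x * a)) I) atTop (𝓝 0) := by
  obtain ⟨C, hC⟩ := hψ.exists_bound
  have hle (m : ℕ) : infDist (ψ m (x * a)) I ≤
      C * ‖x‖ * infDist (ψ m a) I + ‖ψ m (x * a) - ψ m x * ψ m a‖ := by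
    rw [← dist_eq_norm]
    refine infDist_le_infDist_add_dist.trans (add_le_add_left ?_ _)
    exact (I.infDist_mul_le_norm_mul _ _).trans (mul_le_mul_of_nonneg_right (hC m x) infDist_nonneg)
  refine squeeze_zero (fun _ => infDist_nonneg) hle ?_
  simpa using (ha.const_mul (C * ‖x‖)).add
    (tendsto_zero_iff_norm_tendsto_zero.mp (hψ.tendsto_map_mul x a))

lemma tendsto_infDist_mul_right (hψ : IsAsymptoticHom ψ) (I : TwoSidedIdeal R) (x : A) {a : A}
    (ha : Tendsto (fun m => infDist (ψ m a) I) atTop (𝓝 0)) :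
    Tendsto (fun m => infDist (ψ m (a * x)) I) atTop (𝓝 0) := by
  obtain ⟨C, hC⟩ := hψ.exists_bound
  have hle (m : ℕ) : infDist (ψ m (a * x)) I ≤
      infDist (ψ m a) I * (C * ‖x‖) + ‖ψ m (a * x) - ψ m a * ψ m x‖ := by
    rw [← dist_eq_norm]
    refine infDist_le_infDist_add_dist.trans (add_le_add_left ?_ _)
    exact (I.infDist_mul_le_mul_norm _ _).trans (mul_le_mul_of_nonneg_left (hC m x) infDist_nonneg)
  refine squeeze_zero (fun _ => infDist_nonneg) hle ?_
  simpa using (ha.mul_const (C * ‖x‖)).add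
    (tendsto_zero_iff_norm_tendsto_zero.mp (hψ.tendsto_map_mul a x))

def comapIdeal (hψ : IsAsymptoticHom ψ) (I : TwoSidedIdeal R) : TwoSidedIdeal A :=
  .mk' {a | Tendsto (fun m => infDist (ψ m a) I) atTop (𝓝 0)}
    (by simp [infDist_zero_of_mem I.zero_mem])
    (fun ha hb => squeeze_zero (fun _ => infDist_nonneg)
      (fun m => (map_add (ψ m) _ _).symm ▸ I.infDist_add_le _ _) (by simpa using ha.add hb))
    (fun ha => by simpa [I.infDist_neg] using ha)
    (fun ha => hψ.tendsto_infDist_mul_left I _ ha)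
    (fun ha => hψ.tendsto_infDist_mul_right I _ ha)

lemma mem_comapIdeal (hψ : IsAsymptoticHom ψ) (I : TwoSidedIdeal R) (a : A) :
    a ∈ hψ.comapIdeal I ↔ Tendsto (fun m => infDist (ψ m a) I) atTop (𝓝 0) :=
  TwoSidedIdeal.mem_mk' ..

lemma isClosed_comapIdeal (hψ : IsAsymptoticHom ψ) (I : TwoSidedIdeal R) :
    IsClosed (hψ.comapIdeal I : Set A) := by
  obtain ⟨C, hC⟩ := hψ.exists_bound
  have hlip (m : ℕ) : LipschitzWith (1 * C.toNNReal) fun a => infDist (ψ m a) I :=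
    (lipschitz_infDist_pt _).comp (AddMonoidHomClass.lipschitz_of_bound (ψ m) C (hC m))
  have hclosed := (LipschitzWith.uniformEquicontinuous _ _ hlip).equicontinuous
    |>.isClosed_setOfPred_tendsto (l := atTop) (continuous_const (y := (0 : ℝ)))
  convert hclosed
  ext a
  exact hψ.mem_comapIdeal I a

lemma one_mem_of_one_mem_comapIdeal (hψ : IsAsymptoticHom ψ) {I : TwoSidedIdeal R}
    (hI : IsClosed (I : Set R)) (hψ1 : Tendsto (fun m => ψ m 1) atTop (𝓝 1))
    (h1 : (1 : A) ∈ hψ.comapIdeal I) : (1 : R) ∈ I := by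
  have hlim := ((continuous_infDist_pt (I : Set R)).tendsto 1).comp hψ1
  rw [← SetLike.mem_coe, hI.mem_iff_infDist_zero ⟨0, I.zero_mem⟩]
  exact tendsto_nhds_unique hlim ((hψ.mem_comapIdeal I 1).mp h1)

end IsAsymptoticHom

namespace CondExpectation

variable {P A : Type u} [CStarAlgebra P] [CStarAlgebra A] {ι : P →⋆ₐ[ℂ] A}

lemma norm_le_norm_iota (E : CondExpectation ι) (p : P) : ‖p‖ ≤ ‖ι p‖ := by
  simpa only [E.fixes] using E.contractive (ι p)

lemma tendsto_zero_of_tendsto_iota (E : CondExpectation ι) {s : ℕ → P}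
    (hs : Tendsto (fun m => ι (s m)) atTop (𝓝 0)) : Tendsto s atTop (𝓝 0) := by
  rw [tendsto_zero_iff_norm_tendsto_zero] at hs ⊢
  exact squeeze_zero (fun _ => norm_nonneg _) (fun m => E.norm_le_norm_iota (s m)) hs

section

variable (E : CondExpectation ι)

lemma map_iota_mul (p : P) (x : A) : E.toFun (ι p * x) = p * E.toFun x := by
  simpa using E.bimodule p 1 x

lemma map_mul_iota (x : A) (q : P) : E.toFun (x * ι q) = E.toFun x * q := by
  simpa using E.bimodule 1 q x

lemma map_nonneg {x : A} (hx : 0 ≤ x) : 0 ≤ E.toFun x := by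
  obtain ⟨y, rfl⟩ := CStarAlgebra.nonneg_iff_eq_star_mul_self.mp hx
  obtain ⟨z, hz⟩ := E.positive y
  exact hz ▸ star_mul_self_nonneg z

def toPositiveLinearMap : A →ₚ[ℂ] P := .mk₀ E.toFun fun _ => E.map_nonneg

lemma map_star (x : A) : E.toFun (star x) = star (E.toFun x) :=
  StarHomClass.map_star E.toPositiveLinearMap x

lemma mono {x y : A} (h : x ≤ y) : E.toFun x ≤ E.toFun y :=
  OrderHomClass.mono E.toPositiveLinearMap h

lemma mul_star_le (x : A) : E.toFun x * star (E.toFun x) ≤ E.toFun (x * star x) := by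
  have h := E.map_nonneg (mul_star_self_nonneg (x - ι (E.toFun x)))
  have hexp : (x - ι (E.toFun x)) * star (x - ι (E.toFun x)) = x * star x
      - ι (E.toFun x) * star x - x * ι (star (E.toFun x)) + ι (E.toFun x * star (E.toFun x)) := by
    simp only [star_sub, map_mul, StarHomClass.map_star]; noncomm_ring
  rw [hexp, map_add, map_sub, map_sub, map_iota_mul, map_mul_iota, map_star, E.fixes] at h
  rw [← sub_nonneg]
  convert h using 1
  abel

def seqMap : SeqAlg A →ₗ[ℂ] SeqAlg A := mapSeq E.selfMap E.selfMap_contractive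

lemma selfMap_apply (x : A) : E.selfMap x = ι (E.toFun x) := rfl

lemma seqMap_mk (f : BddSeq A) :
    E.seqMap (SeqAlg.mk f) = SeqAlg.mk (mapBdd E.selfMap E.selfMap_contractive f) := rfl

lemma seqMap_star (w : SeqAlg A) : E.seqMap (star w) = star (E.seqMap w) :=
  SeqAlg.mapSeq_star _ _ (fun x => by simp [selfMap_apply, E.map_star, StarHomClass.map_star]) w

lemma seqMap_seqMap_mul (v w : SeqAlg A) : E.seqMap (E.seqMap v * w) = E.seqMap v * E.seqMap w :=
  SeqAlg.mapSeq_mapSeq_mul _ _ (fun x y => by simp [selfMap_apply, map_iota_mul]) v w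

lemma seqMap_mul_seqMap (v w : SeqAlg A) : E.seqMap (w * E.seqMap v) = E.seqMap w * E.seqMap v :=
  SeqAlg.mapSeq_mul_mapSeq _ _ (fun x y => by simp [selfMap_apply, map_mul_iota]) v w

lemma seqMap_constSeq_iota (p : P) : E.seqMap (constSeq A (ι p)) = constSeq A (ι p) := by
  simp [seqMap, SeqAlg.mapSeq_constSeq, selfMap_apply, E.fixes]

lemma seqMap_mul_constSeq_iota (w : SeqAlg A) (p : P) :
    E.seqMap (w * constSeq A (ι p)) = E.seqMap w * constSeq A (ι p) := by
  rw [← E.seqMap_constSeq_iota, seqMap_mul_seqMap]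

end

section

variable {E : CondExpectation ι} {n : ℕ} {u : Fin n → A}

lemma norm_map_mul_sq_le (x v : A) :
    ‖E.toFun (x * v)‖ ^ 2 ≤ ‖v‖ ^ 2 * ‖E.toFun (x * star x)‖ := by
  have hconj : (x * v) * star (x * v) ≤ (‖v‖ ^ 2 : ℝ) • (x * star x) := by
    calc (x * v) * star (x * v) = x * (v * star v) * star x := by rw [star_mul]; noncomm_ring
      _ ≤ x * algebraMap ℝ A (‖v‖ ^ 2) * star x :=
        star_right_conjugate_le_conjugate CStarAlgebra.mul_star_le_algebraMap_norm_sq x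
      _ = (‖v‖ ^ 2 : ℝ) • (x * star x) := by
        rw [Algebra.algebraMap_eq_smul_one, mul_smul_comm, mul_one, smul_mul_assoc]
  have hle := (E.mul_star_le (x * v)).trans (E.mono hconj)
  rw [LinearMap.map_smul_of_tower] at hle
  calc ‖E.toFun (x * v)‖ ^ 2 = ‖E.toFun (x * v) * star (E.toFun (x * v))‖ := by
        rw [CStarRing.norm_self_mul_star, sq]
    _ ≤ ‖(‖v‖ ^ 2 : ℝ) • E.toFun (x * star x)‖ :=
        CStarAlgebra.norm_le_norm_of_nonneg_of_le (mul_star_self_nonneg _) hle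
    _ = ‖v‖ ^ 2 * ‖E.toFun (x * star x)‖ := by rw [norm_smul, Real.norm_of_nonneg (by positivity)]

lemma IsQuasiBasis.norm_le (hu : E.IsQuasiBasis u) (x : A) :
    ‖x‖ ≤ (∑ i, ‖u i‖ ^ 2) * √‖E.toFun (x * star x)‖ := by
  have hi (i : Fin n) : ‖E.toFun (x * u i)‖ ≤ ‖u i‖ * √‖E.toFun (x * star x)‖ := by
    rw [← Real.sqrt_sq (norm_nonneg (E.toFun _)), ← Real.sqrt_sq (norm_nonneg (u i)),
      ← Real.sqrt_mul (sq_nonneg _)]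
    exact Real.sqrt_le_sqrt (norm_map_mul_sq_le x (u i))
  conv_lhs => rw [← hu x]
  calc ‖∑ i, ι (E.toFun (x * u i)) * star (u i)‖ ≤ ∑ i, ‖E.toFun (x * u i)‖ * ‖u i‖ := by
        refine (norm_sum_le _ _).trans (Finset.sum_le_sum fun i _ => ?_)
        refine (norm_mul_le _ _).trans ?_
        rw [norm_star]
        gcongr
        exact NonUnitalStarAlgHom.norm_apply_le ι _
    _ ≤ ∑ i, ‖u i‖ * √‖E.toFun (x * star x)‖ * ‖u i‖ := by gcongr with i; exact hi i
    _ = (∑ i, ‖u i‖ ^ 2) * √‖E.toFun (x * star x)‖ := by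
        rw [Finset.sum_mul]; exact Finset.sum_congr rfl fun i _ => by ring

lemma IsQuasiBasis.tendsto_zero (hu : E.IsQuasiBasis u) {f : ℕ → A}
    (hf : Tendsto (fun m => E.toFun (f m * star (f m))) atTop (𝓝 0)) :
    Tendsto f atTop (𝓝 0) := by
  rw [tendsto_zero_iff_norm_tendsto_zero] at hf ⊢
  have hsqrt : Tendsto (fun m => (∑ i, ‖u i‖ ^ 2) * √‖E.toFun (f m * star (f m))‖)
      atTop (𝓝 0) := by
    simpa using ((Real.continuous_sqrt.tendsto 0).comp hf).const_mul (∑ i, ‖u i‖ ^ 2)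
  exact squeeze_zero (fun _ => norm_nonneg _) (fun m => hu.norm_le (f m)) hsqrt

lemma IsQuasiBasis.sum_mul_map (hu : E.IsQuasiBasis u) (x : A) :
    ∑ i, u i * ι (E.toFun (star (u i) * x)) = x := by
  have h := congrArg star (hu (star x))
  simp only [star_sum, star_mul, star_star] at h
  convert h using 3 with i
  rw [← StarHomClass.map_star ι, ← E.map_star, star_mul, star_star]

lemma IsQuasiBasis.commute_indexElt (hu : E.IsQuasiBasis u) (a : A) :
    Commute (indexElt u) a := by
  have key (i j : Fin n) : u i * ι (E.toFun (star (u i) * a * u j)) * star (u j) =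
      u i * (ι (E.toFun (star (u i) * (a * u j)))) * star (u j) := by rw [mul_assoc _ a]
  calc indexElt u * a = ∑ i, u i * (star (u i) * a) := by
        simp only [indexElt, Finset.sum_mul, mul_assoc]
    _ = ∑ i, ∑ j, u i * ι (E.toFun (star (u i) * a * u j)) * star (u j) := by
        refine Finset.sum_congr rfl fun i _ => ?_
        conv_lhs => rw [← hu (star (u i) * a)]
        simp only [Finset.mul_sum, mul_assoc]
    _ = ∑ j, (a * u j) * star (u j) := by
        rw [Finset.sum_comm]
        simp only [key, ← Finset.sum_mul, hu.sum_mul_map]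
    _ = a * indexElt u := by simp only [indexElt, Finset.mul_sum, mul_assoc]

lemma IsQuasiBasis.sum_seqMap_mul (hu : E.IsQuasiBasis u) (w : SeqAlg A) :
    ∑ i, E.seqMap (w * constSeq A (u i)) * constSeq A (star (u i)) = w :=
  SeqAlg.sum_mapSeq_mul_constSeq _ _ (fun x => hu x) w

lemma IsQuasiBasis.eq_zero_of_seqMap_sum_mul_star (hu : E.IsQuasiBasis u) {κ : Type*}
    [Fintype κ] {d : κ → SeqAlg A} (h : E.seqMap (∑ j, d j * star (d j)) = 0) (i : κ) :
    d i = 0 := by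
  choose f hf using fun j => SeqAlg.mk_surjective (d j)
  simp only [← hf, ← SeqAlg.mk_star, ← map_mul, ← map_sum, seqMap_mk, SeqAlg.mk_eq_zero_iff] at h
  have hsum : Tendsto (fun m => E.toFun (∑ j, (f j : ℕ → A) m * star ((f j : ℕ → A) m)))
      atTop (𝓝 0) :=
    E.tendsto_zero_of_tendsto_iota (by simpa [mapBdd, selfMap_apply, Finset.sum_apply] using h)
  rw [← hf, SeqAlg.mk_eq_zero_iff]
  refine hu.tendsto_zero (squeeze_zero_norm (fun m => ?_)
    (tendsto_zero_iff_norm_tendsto_zero.mp hsum))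
  have hpos (j : κ) : 0 ≤ E.toFun ((f j : ℕ → A) m * star ((f j : ℕ → A) m)) :=
    E.map_nonneg (mul_star_self_nonneg _)
  rw [map_sum]
  exact CStarAlgebra.norm_le_norm_of_nonneg_of_le (hpos i)
    (Finset.single_le_sum (fun j _ => hpos j) (Finset.mem_univ i))

end

variable {n : ℕ}

/-- The data of `E.RokhlinProperty` once `Index E` is known to be the scalar `μ`, so that
`smul_seqMap` says `E^∞(e) = (Index E)⁻¹`. -/
structure IsRokhlinProjection (E : CondExpectation ι) (u : Fin n → A) (μ : ℂ) (e : SeqAlg A) :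
    Prop where
  quasiBasis : E.IsQuasiBasis u
  indexElt_eq : indexElt u = algebraMap ℂ A μ
  isProjection : IsProjection e
  commute : ∀ a : A, Commute (constSeq A a) e
  smul_seqMap : μ • E.seqMap e = 1

def rokhlinMap (E : CondExpectation ι) (μ : ℂ) (e : SeqAlg A) : A →ₗ[ℂ] SeqAlg A :=
  μ • E.seqMap ∘ₗ LinearMap.mulRight ℂ e ∘ₗ (constSeq A).toLinearMap

lemma rokhlinMap_apply (E : CondExpectation ι) (μ : ℂ) (e : SeqAlg A) (x : A) :
    E.rokhlinMap μ e x = μ • E.seqMap (constSeq A x * e) := rfl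

namespace IsRokhlinProjection

variable {E : CondExpectation ι} {u : Fin n → A} {μ : ℂ} {e : SeqAlg A}

lemma star_constSeq_mul (h : E.IsRokhlinProjection u μ e) (x : A) :
    star (constSeq A x * e) = constSeq A (star x) * e := by
  rw [star_mul, h.isProjection.2, ← StarHomClass.map_star, (h.commute _).eq]

lemma constSeq_mul_mul_self (h : E.IsRokhlinProjection u μ e) (x : A) :
    constSeq A x * e * e = constSeq A x * e := by
  rw [mul_assoc, h.isProjection.1]

lemma mul_constSeq_mul (h : E.IsRokhlinProjection u μ e) (x : A) :
    e * (constSeq A x * e) = constSeq A x * e := by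
  rw [← mul_assoc, ← (h.commute x).eq, h.constSeq_mul_mul_self]

lemma sum_seqMap_mul_seqMap (h : E.IsRokhlinProjection u μ e) :
    ∑ i, E.seqMap (constSeq A (u i) * e) * E.seqMap (constSeq A (star (u i)) * e) =
      E.seqMap e := by
  have he : e = ∑ i, E.seqMap (constSeq A (u i) * e) * constSeq A (star (u i)) := by
    conv_lhs => rw [← h.quasiBasis.sum_seqMap_mul e]
    simp only [(h.commute _).eq]
  conv_rhs => rw [← h.isProjection.1]
  conv_rhs => enter [2, 1]; rw [he]
  simp only [Finset.sum_mul, map_sum, mul_assoc, E.seqMap_seqMap_mul]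

lemma smul_injective (h : E.IsRokhlinProjection u μ e) {v w : SeqAlg A} (hvw : μ • v = μ • w) :
    v = w := by
  rw [← one_mul v, ← one_mul w, ← h.smul_seqMap, smul_mul_assoc, smul_mul_assoc, ← mul_smul_comm,
    ← mul_smul_comm, hvw]

lemma rokhlinMap_mul_seqMap (h : E.IsRokhlinProjection u μ e) (x : A) :
    E.rokhlinMap μ e x * E.seqMap e = E.seqMap (constSeq A x * e) := by
  rw [rokhlinMap_apply, smul_mul_assoc, ← mul_smul_comm, h.smul_seqMap, mul_one]

lemma seqMap_defect (h : E.IsRokhlinProjection u μ e) (x : A) :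
    E.seqMap (constSeq A x * e - E.rokhlinMap μ e x * e) = 0 := by
  rw [map_sub, rokhlinMap_apply, smul_mul_assoc, map_smul, E.seqMap_seqMap_mul, ← smul_mul_assoc,
    ← rokhlinMap_apply, h.rokhlinMap_mul_seqMap, sub_self]

lemma seqMap_defect_mul_star (h : E.IsRokhlinProjection u μ e) (x : A) :
    E.seqMap ((constSeq A x * e - E.rokhlinMap μ e x * e) *
        star (constSeq A x * e - E.rokhlinMap μ e x * e)) =
      E.seqMap (constSeq A (x * star x) * e) -
        E.rokhlinMap μ e x * E.seqMap (constSeq A (star x) * e) := by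
  set D := constSeq A x * e - E.rokhlinMap μ e x * e
  have hDe : D * e = D := by
    simp only [D, sub_mul, h.constSeq_mul_mul_self, mul_assoc, h.isProjection.1]
  have hρ : E.rokhlinMap μ e x = E.seqMap (μ • (constSeq A x * e)) := by
    rw [rokhlinMap_apply, map_smul]
  have hρstar : star (E.rokhlinMap μ e x) =
      E.seqMap (star μ • (constSeq A (star x) * e)) := by
    rw [rokhlinMap_apply, star_smul, ← seqMap_star, h.star_constSeq_mul, map_smul]
  calc E.seqMap (D * star D)
      = E.seqMap (D * (constSeq A (star x) * e)) - E.seqMap (D * star (E.rokhlinMap μ e x)) := by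
        rw [star_sub, h.star_constSeq_mul, star_mul, h.isProjection.2, mul_sub, ← mul_assoc D e,
          hDe, map_sub]
    _ = E.seqMap (D * (constSeq A (star x) * e)) := by
        rw [hρstar, seqMap_mul_seqMap, h.seqMap_defect, zero_mul, sub_zero]
    _ = _ := by
        simp only [D, sub_mul, mul_assoc, h.mul_constSeq_mul, map_sub]
        rw [← mul_assoc, ← map_mul, hρ, seqMap_seqMap_mul, ← hρ]

lemma constSeq_mul_eq_of_quasiBasis (h : E.IsRokhlinProjection u μ e) (i : Fin n) :
    constSeq A (u i) * e = E.rokhlinMap μ e (u i) * e := by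
  refine sub_eq_zero.mp (h.quasiBasis.eq_zero_of_seqMap_sum_mul_star
    (d := fun j => constSeq A (u j) * e - E.rokhlinMap μ e (u j) * e) ?_ i)
  have hindex : ∑ j, constSeq A (u j * star (u j)) * e = μ • e := by
    rw [← Finset.sum_mul, ← map_sum, ← indexElt, h.indexElt_eq, AlgHomClass.commutes,
      ← Algebra.smul_def]
  rw [map_sum]
  simp only [h.seqMap_defect_mul_star, Finset.sum_sub_distrib]
  rw [← map_sum, hindex, map_smul]
  simp only [rokhlinMap_apply, smul_mul_assoc, ← Finset.smul_sum, h.sum_seqMap_mul_seqMap,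
    sub_self]

lemma rokhlinMap_mul_iota (h : E.IsRokhlinProjection u μ e) (x : A) (p : P) :
    E.rokhlinMap μ e (x * ι p) = E.rokhlinMap μ e x * constSeq A (ι p) := by
  rw [rokhlinMap_apply, rokhlinMap_apply, map_mul (constSeq A), mul_assoc, (h.commute _).eq,
    ← mul_assoc, seqMap_mul_constSeq_iota, smul_mul_assoc]

lemma constSeq_mul_eq (h : E.IsRokhlinProjection u μ e) (x : A) :
    constSeq A x * e = E.rokhlinMap μ e x * e := by
  conv_lhs => rw [← h.quasiBasis.sum_mul_map x]
  conv_rhs => rw [← h.quasiBasis.sum_mul_map x]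
  simp only [map_sum, Finset.sum_mul, map_mul, h.rokhlinMap_mul_iota, mul_assoc,
    (h.commute (ι _)).eq]
  simp only [← mul_assoc, h.constSeq_mul_eq_of_quasiBasis]

/-- `e x e = x e` gives `e Q e = Q e` for `Q = E^∞(x e)`; for `x*` its adjoint reads
`e Q = e Q e`. -/
lemma commute_seqMap (h : E.IsRokhlinProjection u μ e) (x : A) :
    Commute e (E.seqMap (constSeq A x * e)) := by
  have hece (y : A) : e * E.seqMap (constSeq A y * e) * e = E.seqMap (constSeq A y * e) * e := by
    have hy := h.constSeq_mul_eq y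
    rw [rokhlinMap_apply, smul_mul_assoc] at hy
    have hey := congrArg (e * ·) hy
    simp only [h.mul_constSeq_mul, mul_smul_comm] at hey
    rw [mul_assoc]
    exact h.smul_injective (hey.symm.trans hy)
  have hstar := congrArg star (hece (star x))
  simp only [star_mul, h.isProjection.2, ← seqMap_star, h.star_constSeq_mul, star_star,
    ← mul_assoc] at hstar
  exact hstar.symm.trans (hece x)

lemma rokhlinMap_mul (h : E.IsRokhlinProjection u μ e) (x y : A) :
    E.rokhlinMap μ e (x * y) = E.rokhlinMap μ e x * E.rokhlinMap μ e y := by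
  have hρ : E.rokhlinMap μ e y = E.seqMap (μ • (constSeq A y * e)) := by
    rw [rokhlinMap_apply, map_smul]
  have hcomm : Commute e (E.rokhlinMap μ e y) := (h.commute_seqMap y).smul_right μ
  calc E.rokhlinMap μ e (x * y) = μ • E.seqMap (constSeq A x * (constSeq A y * e)) := by
        rw [rokhlinMap_apply, map_mul (constSeq A), mul_assoc]
    _ = μ • E.seqMap (constSeq A x * e * E.rokhlinMap μ e y) := by
        rw [h.constSeq_mul_eq, ← hcomm.eq, mul_assoc]
    _ = E.rokhlinMap μ e x * E.rokhlinMap μ e y := by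
        rw [hρ, seqMap_mul_seqMap, ← hρ, rokhlinMap_apply E μ e x, smul_mul_assoc]

lemma rokhlinMap_one (h : E.IsRokhlinProjection u μ e) : E.rokhlinMap μ e 1 = 1 := by
  rw [rokhlinMap_apply, map_one, one_mul, h.smul_seqMap]

lemma exists_isAsymptoticHom (h : E.IsRokhlinProjection u μ e) :
    ∃ ψ : ℕ → A →+ P, IsAsymptoticHom ψ ∧ (∀ m p, ψ m (ι p) = p * ψ m 1) ∧
      Tendsto (fun m => ψ m 1) atTop (𝓝 1) := by
  obtain ⟨f, rfl⟩ := SeqAlg.mk_surjective e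
  obtain ⟨C, hC⟩ := f.2
  let ψ (m : ℕ) : A →+ P := (μ • E.toFun ∘ₗ LinearMap.mulRight ℂ ((f : ℕ → A) m)).toAddMonoidHom
  let g (x : A) : BddSeq A := μ • mapBdd E.selfMap E.selfMap_contractive (constBdd x * f)
  have hg (x : A) : E.rokhlinMap μ (SeqAlg.mk f) x = SeqAlg.mk (g x) := rfl
  have hgψ (x : A) (m : ℕ) : (g x : ℕ → A) m = ι (ψ m x) := by
    simp [g, ψ, mapBdd, constBdd, selfMap_apply]
  have htendsto {x y z : A} (hxyz : E.rokhlinMap μ (SeqAlg.mk f) x =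
      E.rokhlinMap μ (SeqAlg.mk f) y * E.rokhlinMap μ (SeqAlg.mk f) z) :
      Tendsto (fun m => ψ m x - ψ m y * ψ m z) atTop (𝓝 0) := by
    rw [hg, hg, hg, ← map_mul, ← sub_eq_zero, ← map_sub, SeqAlg.mk_eq_zero_iff] at hxyz
    exact E.tendsto_zero_of_tendsto_iota (hxyz.congr fun m => by simp [hgψ])
  refine ⟨ψ, ⟨⟨‖μ‖ * C, fun m x => ?_⟩, fun x y => htendsto (h.rokhlinMap_mul x y)⟩,
    fun m p => ?_, ?_⟩
  · calc ‖ψ m x‖ = ‖μ‖ * ‖E.toFun (x * (f : ℕ → A) m)‖ := norm_smul μ _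
      _ ≤ ‖μ‖ * (‖x‖ * C) := by
        gcongr
        exact (E.contractive _).trans ((norm_mul_le _ _).trans (by gcongr; exact hC m))
      _ = ‖μ‖ * C * ‖x‖ := by ring
  · change μ • E.toFun (ι p * (f : ℕ → A) m) = p * (μ • E.toFun (1 * (f : ℕ → A) m))
    rw [map_iota_mul, one_mul, mul_smul_comm]
  · have h1 := h.rokhlinMap_one
    rw [hg, ← map_one SeqAlg.mk, ← sub_eq_zero, ← map_sub, SeqAlg.mk_eq_zero_iff] at h1
    exact tendsto_sub_nhds_zero_iff.mp
      (E.tendsto_zero_of_tendsto_iota (h1.congr fun m => by simp [hgψ]))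

end IsRokhlinProjection

end CondExpectation

theorem statement6_general {P A : Type u} [CStarAlgebra P] [CStarAlgebra A]
    (ι : P →⋆ₐ[ℂ] A)
    (E : CondExpectation ι)
    (hrok : E.RokhlinProperty)
    (hAsimple : IsSimpleCStar A) :
    IsSimpleCStar P := by
  obtain ⟨n, u, hu, e, he, hcomm, hindex, -, -⟩ := hrok
  obtain ⟨μ, hμ⟩ := hAsimple.exists_eq_algebraMap_of_commute hu.commute_indexElt
  have h : E.IsRokhlinProjection u μ e :=
    ⟨hu, hμ, he, hcomm, by rw [← hindex, hμ, AlgHomClass.commutes, ← Algebra.smul_def]; rfl⟩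
  obtain ⟨ψ, hψ, hψι, hψ1⟩ := h.exists_isAsymptoticHom
  have := hAsimple.1
  refine ⟨ι.toRingHom.domain_nontrivial, fun I hI => ?_⟩
  have hmem {p : P} (hp : p ∈ I) : ι p ∈ hψ.comapIdeal I := by
    simp [hψ.mem_comapIdeal, hψι, Metric.infDist_zero_of_mem (I.mul_mem_right _ _ hp)]
  rcases hAsimple.2 _ (hψ.isClosed_comapIdeal I) with h0 | htop
  · refine Or.inl (Set.eq_singleton_iff_unique_mem.mpr ⟨I.zero_mem, fun p hp => ?_⟩)
    have hιp : ι p ∈ (hψ.comapIdeal I : Set A) := hmem hp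
    rw [h0, Set.mem_singleton_iff] at hιp
    rw [← E.fixes p, hιp, map_zero]
  · have h1 : (1 : A) ∈ hψ.comapIdeal I := by simp [← SetLike.mem_coe, htop]
    have h1I := hψ.one_mem_of_one_mem_comapIdeal hI hψ1 h1
    exact Or.inr (Set.eq_univ_of_forall fun p => by simpa using I.mul_mem_left p 1 h1I)

/-- Let `P ⊆ A` be an inclusion of separable unital C*-algebras and
`E : A → P` a faithful conditional expectation of index-finite type with the Rokhlin property.
If `A` is simple, then `P` is simple. -/
theorem statement6 {P A : Type u} [CStarAlgebra P] [CStarAlgebra A]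
    (hPsep : TopologicalSpace.SeparableSpace P) (hAsep : TopologicalSpace.SeparableSpace A)
    (ι : P →⋆ₐ[ℂ] A) (hι : Function.Injective ι)
    (E : CondExpectation ι) (hEf : E.Faithful) (hfin : E.IndexFiniteType)
    (hrok : E.RokhlinProperty)
    (hAsimple : IsSimpleCStar A) :
    IsSimpleCStar P :=
  statement6_general ι E hrok hAsimple
end
end

section
/- Let α be an action of a finite group G on a unital C*-algebra A with the Rokhlin property, let E: A → A^G, E(a) = |G|^{-1} Σ_{g∈G} α_g(a), be the canonical conditional expectation, and suppose {(u_i, u_i*)}_{i=1}^n is a quasi-basis for E satisfying Σ_i u_i u_i* = |G|·1 and Σ_i u_i α_g(u_i*) = 0 for all g ≠ 1. Let H be a subgroup of G and E_H: A → A^H, E_H(x) = |H|^{-1} Σ_{h∈H} α_h(x). Then {(E_H(u_i), E_H(u_i*))}_{i=1}^n is a quasi-basis for the restricted conditional expectation F = E|_{A^H}: A^H → A^G, and Index F = (|G|/|H|)·1. -/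
open Filter Topology

noncomputable section

universe u v w

/-!
Since `E(x uᵢ)` and `E_H(uᵢ*)` are fixed by `H`, they pass through `E_H`, which is the identity
on `A^H`. Hence `∑ᵢ E(x E_H(uᵢ)) E_H(uᵢ)* = E_H(∑ᵢ E(x uᵢ) uᵢ*) = E_H(x) = x` for `x ∈ A^H`, and
`∑ᵢ E_H(uᵢ) E_H(uᵢ)* = E_H(∑ᵢ uᵢ E_H(uᵢ*))`, where
`∑ᵢ uᵢ E_H(uᵢ*) = |H|⁻¹ ∑_{h ∈ H} ∑ᵢ uᵢ α_h(uᵢ*) = |H|⁻¹ |G| · 1` because only `h = 1` contributes.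
-/

lemma inv_card_smul_sum_const {ι K M : Type*} [Fintype ι] [Nonempty ι] [DivisionRing K]
    [CharZero K] [AddCommGroup M] [Module K M] (x : M) :
    (Fintype.card ι : K)⁻¹ • ∑ _i : ι, x = x := by
  rw [Finset.sum_const, Finset.card_univ, ← Nat.cast_smul_eq_nsmul K, smul_smul,
    inv_mul_cancel₀ (Nat.cast_ne_zero.mpr Fintype.card_ne_zero), one_smul]

section Average

variable {G : Type w} [Group G] {A : Type u} [CStarAlgebra A]
  (α : G →* (A ≃⋆ₐ[ℂ] A)) (H : Subgroup G) [Fintype H]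

lemma map_mul_apply (g h : G) (x : A) : α (g * h) x = α g (α h x) := by
  rw [map_mul, StarAlgEquiv.mul_apply]

lemma subgroupAvg_apply (x : A) :
    subgroupAvg α H x = (Fintype.card H : ℂ)⁻¹ • ∑ h : H, α (h : G) x := rfl

lemma map_subgroupAvg (h : H) (x : A) : α (h : G) (subgroupAvg α H x) = subgroupAvg α H x := by
  simp only [subgroupAvg_apply, map_smul, map_sum, ← map_mul_apply]
  congr 1
  exact Equiv.sum_comp (Equiv.mulLeft h) (fun k : H => α (k : G) x)

lemma subgroupAvg_of_fixed {x : A} (hx : ∀ h : H, α (h : G) x = x) : subgroupAvg α H x = x := by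
  simp only [subgroupAvg_apply, hx, inv_card_smul_sum_const]

lemma star_subgroupAvg (x : A) : star (subgroupAvg α H x) = subgroupAvg α H (star x) := by
  simp only [subgroupAvg_apply, star_smul, star_sum, map_star, star_inv₀, star_natCast]

lemma subgroupAvg_mul_left_of_fixed {x : A} (hx : ∀ h : H, α (h : G) x = x) (y : A) :
    subgroupAvg α H (x * y) = x * subgroupAvg α H y := by
  simp only [subgroupAvg_apply, map_mul, hx, mul_smul_comm, Finset.mul_sum]

lemma subgroupAvg_mul_right_of_fixed {y : A} (hy : ∀ h : H, α (h : G) y = y) (x : A) :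
    subgroupAvg α H (x * y) = subgroupAvg α H x * y := by
  simp only [subgroupAvg_apply, map_mul, hy, smul_mul_assoc, Finset.sum_mul]

variable [Fintype G]

lemma groupAvg_apply (x : A) : groupAvg α x = (Fintype.card G : ℂ)⁻¹ • ∑ g, α g x := rfl

lemma map_groupAvg (g : G) (x : A) : α g (groupAvg α x) = groupAvg α x := by
  simp only [groupAvg_apply, map_smul, map_sum, ← map_mul_apply]
  congr 1
  exact Equiv.sum_comp (Equiv.mulLeft g) (fun k => α k x)

lemma groupAvg_map (g : G) (x : A) : groupAvg α (α g x) = groupAvg α x := by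
  simp only [groupAvg_apply, ← map_mul_apply]
  congr 1
  exact Equiv.sum_comp (Equiv.mulRight g) (fun k => α k x)

lemma groupAvg_subgroupAvg (x : A) : groupAvg α (subgroupAvg α H x) = groupAvg α x := by
  simp only [subgroupAvg_apply, map_smul, map_sum, groupAvg_map, inv_card_smul_sum_const]

lemma groupAvg_mul_subgroupAvg_of_fixed {x : A} (hx : ∀ h : H, α (h : G) x = x) (y : A) :
    groupAvg α (x * subgroupAvg α H y) = groupAvg α (x * y) := by
  rw [← subgroupAvg_mul_left_of_fixed α H hx, groupAvg_subgroupAvg]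

variable {α} {n : ℕ} {u : Fin n → A}

lemma sum_groupAvg_mul_star_subgroupAvg
    (hqb : ∀ x : A, ∑ i, groupAvg α (x * u i) * star (u i) = x)
    {x : A} (hx : ∀ h : H, α (h : G) x = x) :
    ∑ i, groupAvg α (x * subgroupAvg α H (u i)) * star (subgroupAvg α H (u i)) = x := by
  have hfix : ∀ i, ∀ h : H, α (h : G) (groupAvg α (x * u i)) = groupAvg α (x * u i) :=
    fun i h => map_groupAvg α h _
  calc ∑ i, groupAvg α (x * subgroupAvg α H (u i)) * star (subgroupAvg α H (u i))
      = ∑ i, subgroupAvg α H (groupAvg α (x * u i) * star (u i)) := by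
        refine Finset.sum_congr rfl fun i _ => ?_
        rw [groupAvg_mul_subgroupAvg_of_fixed α H hx, star_subgroupAvg,
          subgroupAvg_mul_left_of_fixed α H (hfix i)]
    _ = x := by rw [← map_sum, hqb, subgroupAvg_of_fixed α H hx]

lemma sum_mul_subgroupAvg_star (hidx : ∑ i, u i * star (u i) = (Fintype.card G : ℂ) • 1)
    (horth : ∀ g : G, g ≠ 1 → ∑ i, u i * α g (star (u i)) = 0) :
    ∑ i, u i * subgroupAvg α H (star (u i))
      = ((Fintype.card G : ℂ) / (Fintype.card H : ℂ)) • 1 := by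
  calc ∑ i, u i * subgroupAvg α H (star (u i))
      = (Fintype.card H : ℂ)⁻¹ • ∑ h : H, ∑ i, u i * α (h : G) (star (u i)) := by
        simp only [subgroupAvg_apply, mul_smul_comm, Finset.mul_sum, ← Finset.smul_sum]
        rw [Finset.sum_comm]
    _ = (Fintype.card H : ℂ)⁻¹ • (Fintype.card G : ℂ) • 1 := by
        rw [Finset.sum_eq_single_of_mem (1 : H) (Finset.mem_univ _)
          fun h _ hh => horth h (OneMemClass.coe_eq_one.not.mpr hh)]
        simpa only [OneMemClass.coe_one, map_one, StarAlgEquiv.one_apply] using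
          congrArg _ hidx
    _ = ((Fintype.card G : ℂ) / (Fintype.card H : ℂ)) • 1 := by
        rw [smul_smul, div_eq_inv_mul]

lemma sum_subgroupAvg_mul_star_subgroupAvg
    (hidx : ∑ i, u i * star (u i) = (Fintype.card G : ℂ) • 1)
    (horth : ∀ g : G, g ≠ 1 → ∑ i, u i * α g (star (u i)) = 0) :
    ∑ i, subgroupAvg α H (u i) * star (subgroupAvg α H (u i))
      = ((Fintype.card G : ℂ) / (Fintype.card H : ℂ)) • 1 := by
  calc ∑ i, subgroupAvg α H (u i) * star (subgroupAvg α H (u i))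
      = subgroupAvg α H (∑ i, u i * subgroupAvg α H (star (u i))) := by
        rw [map_sum]
        refine Finset.sum_congr rfl fun i _ => ?_
        rw [star_subgroupAvg, subgroupAvg_mul_right_of_fixed α H (map_subgroupAvg α H · _)]
    _ = ((Fintype.card G : ℂ) / (Fintype.card H : ℂ)) • 1 := by
        rw [sum_mul_subgroupAvg_star H hidx horth,
          subgroupAvg_of_fixed α H fun h => by rw [map_smul, map_one]]

end Average

theorem statement16_general {G A : Type u} [Group G] [Fintype G] [CStarAlgebra A]
    (α : G →* (A ≃⋆ₐ[ℂ] A))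
    {n : ℕ} (u : Fin n → A)
    (hqb : ∀ x : A, ∑ i, groupAvg α (x * u i) * star (u i) = x)
    (hidx : ∑ i, u i * star (u i) = (Fintype.card G : ℂ) • 1)
    (horth : ∀ g : G, g ≠ 1 → ∑ i, u i * α g (star (u i)) = 0)
    (H : Subgroup G) [Fintype H] :
    (∀ x : A, (∀ h : H, α (h : G) x = x) →
      ∑ i, groupAvg α (x * subgroupAvg α H (u i)) * star (subgroupAvg α H (u i)) = x) ∧
    ∑ i, subgroupAvg α H (u i) * star (subgroupAvg α H (u i))
      = ((Fintype.card G : ℂ) / (Fintype.card H : ℂ)) • 1 :=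
  ⟨fun _ hx => sum_groupAvg_mul_star_subgroupAvg H hqb hx,
    sum_subgroupAvg_mul_star_subgroupAvg H hidx horth⟩

/-- Let `α` be an action of a finite group `G` on a unital C*-algebra `A`
with the Rokhlin property, and let `E : A → A^G` be the canonical conditional expectation with
a quasi-basis `{(uᵢ, uᵢ*)}` satisfying `∑ᵢ uᵢuᵢ* = |G|·1` and `∑ᵢ uᵢ α_g(uᵢ*) = 0` for
`g ≠ 1`.  Then, for a subgroup `H ≤ G`, `{(E_H(uᵢ), E_H(uᵢ)*)}` is a quasi-basis for the
restricted conditional expectation `F = E|_{A^H} : A^H → A^G` and `Index F = (|G|/|H|)·1`. -/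
theorem statement16 {G A : Type u} [Group G] [Fintype G] [CStarAlgebra A]
    (α : G →* (A ≃⋆ₐ[ℂ] A)) (hα : ActionRokhlin α)
    {n : ℕ} (u : Fin n → A)
    (hqb : ∀ x : A, ∑ i, groupAvg α (x * u i) * star (u i) = x)
    (hidx : ∑ i, u i * star (u i) = (Fintype.card G : ℂ) • 1)
    (horth : ∀ g : G, g ≠ 1 → ∑ i, u i * α g (star (u i)) = 0)
    (H : Subgroup G) [Fintype H] :
    (∀ x : A, (∀ h : H, α (h : G) x = x) →
      ∑ i, groupAvg α (x * subgroupAvg α H (u i)) * star (subgroupAvg α H (u i)) = x) ∧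
    ∑ i, subgroupAvg α H (u i) * star (subgroupAvg α H (u i))
      = ((Fintype.card G : ℂ) / (Fintype.card H : ℂ)) • 1 :=
  statement16_general α u hqb hidx horth H
end
end
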